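/- arXiv:1410.7207 — 2 statements merged into one kernel-verified Lean document; each statement's English description precedes it below -/
import Mathlib

section
/- There exists a 2-dimensional linear code C ⊆ F_2^3 (namely the span of (1,0,1) and (0,1,1)) such that dim(C) = maxwt(C) = 2 but C is not of the form C_2(3,S) for any subset S of size 2; in particular the characterization of optimal anticodes as free codes fails for q = 2. -/
/-- Hamming weight of a vector. -/
noncomputable def hwt {n : ℕ} {K : Type*} [Zero K] (v : Fin n → K) : ℕ := Set.ncard {i | v i ≠ 0}

/-- Maximum Hamming weight of a linear code. -/
noncomputable def maxwt {n : ℕ} {K : Type*} [Field K] (C : Submodule K (Fin n → K)) : ℕ :=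
  sSup {w | ∃ v ∈ C, hwt v = w}

/-- The free code supported by S: vectors vanishing outside S. -/
def freeCode (K : Type*) [Field K] (n : ℕ) (S : Finset (Fin n)) : Submodule K (Fin n → K) where
  carrier := {v | ∀ i ∉ S, v i = 0}
  add_mem' := fun {a b} ha hb i hi => by simp [ha i hi, hb i hi]
  zero_mem' := fun i _ => rfl
  smul_mem' := fun c v hv i hi => by simp [hv i hi]

/-!
Both generators have even weight, so `C` lies in the even-weight code of `𝔽₂³`, whose weights are
even and at most 3, hence at most 2. A free code on a nonempty support contains a unit vector, of
odd weight, so it is never contained in `C`.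
-/

open Finset

lemma hwt_eq_card_filter {n : ℕ} {K : Type*} [Zero K] [DecidableEq K] (v : Fin n → K) :
    hwt v = #{i | v i ≠ 0} := by
  rw [hwt, ← Set.ncard_coe_finset, coe_filter_univ]

lemma hwt_le {n : ℕ} {K : Type*} [Zero K] (v : Fin n → K) : hwt v ≤ n :=
  (Set.ncard_le_ncard (Set.subset_univ _)).trans_eq (by simp)

lemma maxwt_eq_of_forall_hwt_le {n w : ℕ} {K : Type*} [Field K] {C : Submodule K (Fin n → K)}
    (hle : ∀ v ∈ C, hwt v ≤ w) {v : Fin n → K} (hv : v ∈ C) (hw : hwt v = w) : maxwt C = w := by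
  have hub : w ∈ upperBounds {w | ∃ v ∈ C, hwt v = w} := by
    rintro _ ⟨u, hu, rfl⟩
    exact hle u hu
  exact le_antisymm (csSup_le ⟨w, v, hv, hw⟩ hub) (le_csSup ⟨w, hub⟩ ⟨v, hv, hw⟩)

lemma single_mem_freeCode {K : Type*} [Field K] {n : ℕ} {S : Finset (Fin n)} {i : Fin n}
    (hi : i ∈ S) (c : K) : Pi.single i c ∈ freeCode K n S := fun _ hj =>
  Pi.single_eq_of_ne (ne_of_mem_of_not_mem hi hj).symm (M := fun _ => K) c

def evenWeightCode (n : ℕ) : Submodule (ZMod 2) (Fin n → ZMod 2) where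
  carrier := {v | ∑ i, v i = 0}
  add_mem' {u v} hu hv := by simp_all [sum_add_distrib]
  zero_mem' := by simp
  smul_mem' c v hv := by simp_all [← mul_sum]

lemma mem_evenWeightCode {n : ℕ} {v : Fin n → ZMod 2} :
    v ∈ evenWeightCode n ↔ ∑ i, v i = 0 := Iff.rfl

lemma sum_eq_hwt {n : ℕ} (v : Fin n → ZMod 2) : ∑ i, v i = hwt v := by
  have hone : ∀ x : ZMod 2, x ≠ 0 → x = 1 := by decide
  rw [hwt_eq_card_filter, ← sum_filter_ne_zero,
    sum_congr rfl fun i hi => hone _ (mem_filter.1 hi).2]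
  simp

lemma mem_evenWeightCode_iff {n : ℕ} {v : Fin n → ZMod 2} :
    v ∈ evenWeightCode n ↔ Even (hwt v) := by
  rw [mem_evenWeightCode, sum_eq_hwt, ZMod.natCast_eq_zero_iff_even]

lemma not_freeCode_le_evenWeightCode {n : ℕ} {S : Finset (Fin n)} (hS : S.Nonempty) :
    ¬ freeCode (ZMod 2) n S ≤ evenWeightCode n := fun hle => by
  obtain ⟨i, hi⟩ := hS
  have := mem_evenWeightCode_iff.1 (hle (single_mem_freeCode hi 1))
  simp [hwt_eq_card_filter, Pi.single_apply, filter_eq'] at this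

/-- over F_2 the span of (1,0,1) and (0,1,1) in F_2^3 is a
2-dimensional optimal linear anticode which is not a free code on a 2-element
support, so the characterization of optimal anticodes as free codes fails for q = 2. -/
theorem stmt4 :
    ∃ C : Submodule (ZMod 2) (Fin 3 → ZMod 2),
      C = Submodule.span (ZMod 2) {![1,0,1], ![0,1,1]} ∧
      Module.finrank (ZMod 2) C = 2 ∧ maxwt C = 2 ∧
      ¬ ∃ S : Finset (Fin 3), S.card = 2 ∧ C = freeCode (ZMod 2) 3 S := by
  set a : Fin 3 → ZMod 2 := ![1,0,1]
  set b : Fin 3 → ZMod 2 := ![0,1,1]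
  have hab : LinearIndependent (ZMod 2) ![a, b] := by
    rw [LinearIndependent.pair_iff]; decide
  have heven : Submodule.span (ZMod 2) {a, b} ≤ evenWeightCode 3 := by
    rw [Submodule.span_le, Set.insert_subset_iff, Set.singleton_subset_iff]
    exact ⟨mem_evenWeightCode.2 (by decide), mem_evenWeightCode.2 (by decide)⟩
  have hwt_a : hwt a = 2 := by rw [hwt_eq_card_filter]; decide
  refine ⟨_, rfl, ?_, ?_, ?_⟩
  · rw [← Matrix.range_cons_cons_empty a b ![], finrank_span_eq_card hab, Fintype.card_fin]
  · refine maxwt_eq_of_forall_hwt_le (fun v hv => ?_) (Submodule.subset_span (by simp)) hwt_a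
    obtain ⟨k, hk⟩ := mem_evenWeightCode_iff.1 (heven hv)
    have := hwt_le v
    omega
  · rintro ⟨S, hS, hC⟩
    exact not_freeCode_le_evenWeightCode (card_pos.1 (by omega)) (hC ▸ heven)
end

section
/- Let 1 ≤ k ≤ m and let C ⊆ F_{q^m}^k be a nonzero Gabidulin code of dimension 1 ≤ t ≤ k. For any 1 ≤ r ≤ t, the r-th generalized rank weight m_r(C) = min{dim(V) : V Frobenius-closed, dim(V ∩ C) ≥ r} equals min{dim(A) : A ⊆ F_{q^m}^k with dim_{F_{q^m}}(A) = maxrk(A) and dim(A ∩ C) ≥ r}. -/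
/-!
A subspace `V ⊆ L^k` is Frobenius-closed exactly when it has a basis of vectors with entries in
`K`. In such a basis `b₁, …, b_d` the rank of `∑ λᵢ bᵢ` is `dim_K span_K {λᵢ}`, so a
Frobenius-closed space of dimension `d ≤ m` has `maxrk = d`.

Conversely, let `maxrk A = dim A` and let `A*` be the Frobenius closure of `A`, with a basis as
above. A hyperplane `∑ cᵢ λᵢ = 0` of coordinates with `0 ≠ c ∈ K^d` is Frobenius-closed, so it
cannot contain the coordinates of all of `A`; there are fewer than `|L|` such hyperplanes, so a
single vector of `A` avoids all of them, i.e. has `K`-independent coordinates and rank `dim A*`.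
Hence `dim A* ≤ maxrk A = dim A` and `A = A*`.
-/

/-- Rank of a vector v ∈ L^k over K. -/
noncomputable def vrk (K : Type*) {L : Type*} [Field K] [Field L] [Algebra K L]
    {k : ℕ} (v : Fin k → L) : ℕ :=
  Module.finrank K (Submodule.span K (Set.range v))

/-- Maximum rank of a Gabidulin code. -/
noncomputable def maxrk (K : Type*) {L : Type*} [Field K] [Field L] [Algebra K L]
    {k : ℕ} (C : Submodule L (Fin k → L)) : ℕ :=
  sSup {r | ∃ v ∈ C, vrk K v = r}

/-- V is Frobenius-closed if stable under the componentwise q-power map. -/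
def FrobClosed (K : Type*) {L : Type*} [Field K] [Fintype K] [Field L] [Algebra K L]
    {k : ℕ} (V : Submodule L (Fin k → L)) : Prop :=
  ∀ v ∈ V, (fun i => v i ^ Fintype.card K) ∈ V

open Module Submodule Matrix

section Rank

variable {K L : Type*} [Field K] [Field L] [Algebra K L] {k : ℕ}

theorem vrk_le (v : Fin k → L) : vrk K v ≤ k :=
  (finrank_range_le_card (R := K) v).trans_eq (Fintype.card_fin k)

theorem vrk_le_maxrk {A : Submodule L (Fin k → L)} {v : Fin k → L} (hv : v ∈ A) :
    vrk K v ≤ maxrk K A :=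
  le_csSup ⟨k, by rintro _ ⟨w, -, rfl⟩; exact vrk_le w⟩ ⟨v, hv, rfl⟩

theorem maxrk_le {A : Submodule L (Fin k → L)} {d : ℕ} (h : ∀ v ∈ A, vrk K v ≤ d) :
    maxrk K A ≤ d :=
  csSup_le ⟨_, 0, A.zero_mem, rfl⟩ (by rintro _ ⟨v, hv, rfl⟩; exact h v hv)

theorem vrk_vecMul_map_algebraMap {d : ℕ} {β : Matrix (Fin d) (Fin k) K}
    (hβ : LinearIndependent K β.row) (c : Fin d → L) :
    vrk K (c ᵥ* β.map (algebraMap K L)) = finrank K (span K (Set.range c)) := by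
  have hcols : span K (Set.range β.col) = ⊤ :=
    eq_top_of_finrank_eq <| by
      rw [← rank_eq_finrank_span_cols, hβ.rank_matrix, finrank_fin_fun, Fintype.card_fin]
  have hentries : c ᵥ* β.map (algebraMap K L) = Fintype.linearCombination K c ∘ β.col := by
    ext j
    simp [vecMul, dotProduct, Fintype.linearCombination_apply, Algebra.smul_def, mul_comm]
  rw [vrk, hentries, Set.range_comp, ← map_span, hcols, Submodule.map_top,
    Fintype.range_linearCombination]

end Rank

section Frobenius

variable {K L : Type*} [Field K] [Field L] [Algebra K L] [Fintype K] {k d : ℕ}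

theorem FrobClosed.pow_card_pow_mem {V : Submodule L (Fin k → L)} (hV : FrobClosed K V)
    {v : Fin k → L} (hv : v ∈ V) (n : ℕ) : (fun j => v j ^ Fintype.card K ^ n) ∈ V := by
  induction n with
  | zero => simpa using hv
  | succ n ih => simpa only [pow_succ, pow_mul] using hV _ ih

theorem FrobClosed.algebraMap_trace_mem [FiniteDimensional K L] {V : Submodule L (Fin k → L)}
    (hV : FrobClosed K V) {v : Fin k → L} (hv : v ∈ V) :
    Pi.algebraMap (Fin k) K L (fun j => Algebra.trace K L (v j)) ∈ V := by
  have : Finite L := Module.finite_of_finite K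
  have hsum : Pi.algebraMap (Fin k) K L (fun j => Algebra.trace K L (v j)) =
      ∑ n ∈ Finset.range (finrank K L), fun j => v j ^ Fintype.card K ^ n := by
    ext j
    simp [Pi.algebraMap, FiniteField.algebraMap_trace_eq_sum_pow, Nat.card_eq_fintype_card]
  rw [hsum]
  exact sum_mem fun n _ => hV.pow_card_pow_mem hv n

-- Expand each entry in the trace-dual basis: `x = ∑ Tr(bᵢ x) • bᵢ^∨`.
theorem FrobClosed.le_span_inter_range_algebraMap [FiniteDimensional K L]
    {V : Submodule L (Fin k → L)} (hV : FrobClosed K V) :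
    V ≤ span L (V ∩ Set.range (Pi.algebraMap (Fin k) K L)) := by
  intro v hv
  let b := Module.finBasis K L
  have hexpand : v = ∑ i, b.traceDual i •
      Pi.algebraMap (Fin k) K L (fun j => Algebra.trace K L ((b i • v) j)) := by
    ext j
    conv_lhs => rw [← b.traceDual.sum_repr (v j)]
    simp [Finset.sum_apply, Algebra.smul_def, Pi.algebraMap, mul_comm]
  rw [hexpand]
  exact sum_mem fun i _ => smul_mem _ _
    (subset_span ⟨hV.algebraMap_trace_mem (V.smul_mem _ hv), Set.mem_range_self _⟩)

theorem FrobClosed.exists_range_vecMulLinear_eq [FiniteDimensional K L]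
    {V : Submodule L (Fin k → L)} (hV : FrobClosed K V) :
    ∃ β : Matrix (Fin (finrank L V)) (Fin k) K,
      LinearIndependent K β.row ∧ LinearMap.range (β.map (algebraMap K L)).vecMulLinear = V := by
  obtain ⟨s, hsV, hspan, hli⟩ :=
    exists_linearIndependent L (V ∩ Set.range (Pi.algebraMap (Fin k) K L))
  replace hspan : span L s = V :=
    hspan.trans (le_antisymm (span_le.mpr Set.inter_subset_left) hV.le_span_inter_range_algebraMap)
  have := hli.finite
  have := Fintype.ofFinite s
  have hcard : Fintype.card s = finrank L V := by
    rw [← hspan, ← finrank_span_eq_card hli, Subtype.range_coe]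
  let e : Fin (finrank L V) ≃ s := (Fintype.equivFinOfCardEq hcard).symm
  choose β hβ using fun x : s => (hsV x.2).2
  let B : Matrix (Fin (finrank L V)) (Fin k) K := Matrix.of fun i => β (e i)
  have hrows : (B.map (algebraMap K L)).row = Subtype.val ∘ e :=
    funext fun i => hβ (e i)
  refine ⟨B, (linearIndependent_algebraMap_comp_iff (S := L)).mp ?_, ?_⟩
  · change LinearIndependent L (B.map (algebraMap K L)).row
    exact hrows ▸ hli.comp e e.injective
  · rw [range_vecMulLinear, hrows, EquivLike.range_comp, Subtype.range_coe, hspan]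

theorem pow_card_vecMul_map_algebraMap (β : Matrix (Fin d) (Fin k) K) (c : Fin d → L) :
    (fun j => (c ᵥ* β.map (algebraMap K L)) j ^ Fintype.card K) =
      (fun i => c i ^ Fintype.card K) ᵥ* β.map (algebraMap K L) := by
  ext j
  simpa [Matrix.map_map, Function.comp_def] using
    RingHom.map_vecMul (FiniteField.frobeniusAlgHom K L : L →+* L) (β.map (algebraMap K L)) c j

theorem FrobClosed.map_vecMulLinear {U : Submodule L (Fin d → L)} (hU : FrobClosed K U)
    (β : Matrix (Fin d) (Fin k) K) :
    FrobClosed K (U.map (β.map (algebraMap K L)).vecMulLinear) := by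
  rintro _ ⟨c, hc, rfl⟩
  exact ⟨_, hU c hc, (pow_card_vecMul_map_algebraMap β c).symm⟩

theorem frobClosed_ker_linearCombination (c : Fin d → K) :
    FrobClosed K (LinearMap.ker (Fintype.linearCombination L (algebraMap K L ∘ c))) := by
  intro x hx
  simpa [Fintype.linearCombination_apply, mul_pow, ← map_pow, FiniteField.pow_card] using
    congrArg (FiniteField.frobeniusAlgHom K L) hx

variable (K) in
def frobClosure (A : Submodule L (Fin k → L)) : Submodule L (Fin k → L) :=
  sInf {W | FrobClosed K W ∧ A ≤ W}

theorem frobClosed_frobClosure (A : Submodule L (Fin k → L)) : FrobClosed K (frobClosure K A) :=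
  fun v hv => mem_sInf.mpr fun W hW => hW.1 v (mem_sInf.mp hv W hW)

theorem le_frobClosure (A : Submodule L (Fin k → L)) : A ≤ frobClosure K A :=
  le_sInf fun _ hW => hW.2

theorem frobClosure_le {A W : Submodule L (Fin k → L)} (hW : FrobClosed K W) (hAW : A ≤ W) :
    frobClosure K A ≤ W :=
  sInf_le ⟨hW, hAW⟩

end Frobenius

theorem Submodule.exists_le_of_coe_subset_biUnion {ι F M : Type*} [Field F] [AddCommGroup M]
    [Module F M] {s : Finset ι} (hs : s.card < ENat.card F) (p : ι → Submodule F M)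
    {U : Submodule F M} (hU : (U : Set M) ⊆ ⋃ i ∈ s, (p i : Set M)) :
    ∃ i ∈ s, U ≤ p i := by
  by_contra! h
  have hproper := iUnion_ssubset_of_forall_ne_top_of_card_lt (Finset.univ : Finset s)
    (fun i => (p i).comap U.subtype) (fun i => by simpa using h i i.2) (by simpa using hs)
  obtain ⟨x, -, hx⟩ := Set.exists_of_ssubset hproper
  obtain ⟨i, hi, hxi⟩ := Set.mem_iUnion₂.mp (hU x.2)
  exact hx (Set.mem_iUnion₂.mpr ⟨⟨i, hi⟩, Finset.mem_univ _, hxi⟩)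

section Anticode

variable {K L : Type*} [Field K] [Field L] [Algebra K L] [Fintype K] [FiniteDimensional K L]
  {k d : ℕ}

theorem exists_linearIndependent_mem_of_forall_not_le_ker (hd : d ≤ finrank K L)
    {U : Submodule L (Fin d → L)}
    (hU : ∀ c : Fin d → K, c ≠ 0 →
      ¬ U ≤ LinearMap.ker (Fintype.linearCombination L (algebraMap K L ∘ c))) :
    ∃ x ∈ U, LinearIndependent K x := by
  classical
  by_contra! h
  have := Module.finite_of_finite K (M := L)
  have := Fintype.ofFinite L
  have hcard : (Finset.univ.erase (0 : Fin d → K)).card < ENat.card L := by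
    rw [Finset.card_erase_of_mem (Finset.mem_univ _), Finset.card_univ, Fintype.card_fun,
      Fintype.card_fin, ENat.card_eq_coe_fintype_card, Module.card_eq_pow_finrank (K := K) (V := L)]
    exact_mod_cast (Nat.sub_lt (by positivity) one_pos).trans_le
      (Nat.pow_le_pow_right Fintype.card_pos hd)
  have hcover : (U : Set (Fin d → L)) ⊆ ⋃ c ∈ Finset.univ.erase (0 : Fin d → K),
      (LinearMap.ker (Fintype.linearCombination L (algebraMap K L ∘ c)) : Set (Fin d → L)) := by
    intro x hx
    obtain ⟨g, hg, i, hgi⟩ := Fintype.not_linearIndependent_iff.mp (h x hx)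
    have hg0 : g ≠ 0 := fun h0 => hgi (by simp [h0])
    refine Set.mem_iUnion₂.mpr ⟨g, Finset.mem_erase.mpr ⟨hg0, Finset.mem_univ _⟩, ?_⟩
    simpa [Fintype.linearCombination_apply, Algebra.smul_def, mul_comm] using hg
  obtain ⟨c, hc, hUc⟩ := Submodule.exists_le_of_coe_subset_biUnion hcard _ hcover
  exact hU c (Finset.ne_of_mem_erase hc) hUc

theorem exists_finrank_frobClosure_le_vrk (A : Submodule L (Fin k → L))
    (hA : finrank L (frobClosure K A) ≤ finrank K L) :
    ∃ v ∈ A, finrank L (frobClosure K A) ≤ vrk K v := by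
  obtain ⟨β, hβ, hrange⟩ := (frobClosed_frobClosure (K := K) A).exists_range_vecMulLinear_eq
  set T := (β.map (algebraMap K L)).vecMulLinear
  have hT : Function.Injective T :=
    vecMul_injective_iff.mpr ((linearIndependent_algebraMap_comp_iff (S := L)).mpr hβ)
  have hgeneric : ∀ c : Fin (finrank L (frobClosure K A)) → K, c ≠ 0 →
      ¬ A.comap T ≤ LinearMap.ker (Fintype.linearCombination L (algebraMap K L ∘ c)) := by
    intro c hc hle
    have hAW : A ≤ (LinearMap.ker (Fintype.linearCombination L (algebraMap K L ∘ c))).map T := by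
      intro x hx
      obtain ⟨y, rfl⟩ := hrange.ge (le_frobClosure A hx)
      exact ⟨y, hle hx, rfl⟩
    have hW := frobClosure_le ((frobClosed_ker_linearCombination c).map_vecMulLinear β) hAW
    obtain ⟨i, hi⟩ := Function.ne_iff.mp hc
    obtain ⟨y, hy, hyi⟩ := hW (hrange.le (LinearMap.mem_range_self T (Pi.single i 1)))
    rw [hT hyi] at hy
    exact hi (by simpa using hy)
  obtain ⟨c, hc, hcli⟩ := exists_linearIndependent_mem_of_forall_not_le_ker hA hgeneric
  refine ⟨T c, hc, ?_⟩
  rw [vecMulLinear_apply, vrk_vecMul_map_algebraMap hβ, finrank_span_eq_card hcli,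
    Fintype.card_fin]

theorem FrobClosed.finrank_eq_maxrk {V : Submodule L (Fin k → L)} (hV : FrobClosed K V)
    (hVm : finrank L V ≤ finrank K L) : finrank L V = maxrk K V := by
  obtain ⟨β, hβ, hrange⟩ := hV.exists_range_vecMulLinear_eq
  apply le_antisymm
  · obtain ⟨c, hc⟩ := exists_linearIndependent_of_le_finrank hVm
    have := vrk_le_maxrk (K := K) (hrange.le (LinearMap.mem_range_self _ c))
    rwa [vecMulLinear_apply, vrk_vecMul_map_algebraMap hβ, finrank_span_eq_card hc,
      Fintype.card_fin] at this
  · refine maxrk_le fun v hv => ?_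
    obtain ⟨c, rfl⟩ := hrange.ge hv
    rw [vecMulLinear_apply, vrk_vecMul_map_algebraMap hβ]
    exact (finrank_range_le_card c).trans_eq (Fintype.card_fin _)

theorem frobClosed_of_maxrk_le_finrank (hk : k ≤ finrank K L) {A : Submodule L (Fin k → L)}
    (hA : maxrk K A ≤ finrank L A) : FrobClosed K A := by
  have hdim : finrank L (frobClosure K A) ≤ k := (finrank_le _).trans_eq (finrank_fin_fun L)
  obtain ⟨v, hv, hle⟩ := exists_finrank_frobClosure_le_vrk A (hdim.trans hk)
  have hA_eq : A = frobClosure K A :=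
    eq_of_le_of_finrank_le (le_frobClosure A) (hle.trans ((vrk_le_maxrk hv).trans hA))
  exact hA_eq ▸ frobClosed_frobClosure A

theorem frobClosed_iff_finrank_eq_maxrk (hk : k ≤ finrank K L) (V : Submodule L (Fin k → L)) :
    FrobClosed K V ↔ finrank L V = maxrk K V :=
  ⟨fun hV => hV.finrank_eq_maxrk (((finrank_le V).trans_eq (finrank_fin_fun L)).trans hk),
    fun h => frobClosed_of_maxrk_le_finrank hk h.ge⟩

end Anticode

theorem stmt10_general {K L : Type*} [Field K] [Field L] [Algebra K L] [Fintype K] {k m : ℕ}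
    (hk : 1 ≤ k) (hkm : k ≤ m) (hm : Module.finrank K L = m)
    (C : Submodule L (Fin k → L))
    (r : ℕ) :
    sInf {d : ℕ | ∃ V : Submodule L (Fin k → L),
        FrobClosed K V ∧ r ≤ Module.finrank L ↥(V ⊓ C) ∧ Module.finrank L V = d} =
    sInf {d : ℕ | ∃ A : Submodule L (Fin k → L),
        Module.finrank L A = maxrk K A ∧ r ≤ Module.finrank L ↥(A ⊓ C) ∧
        Module.finrank L A = d} := by
  have : FiniteDimensional K L := .of_finrank_pos (by omega)
  simp_rw [frobClosed_iff_finrank_eq_maxrk (hm ▸ hkm : k ≤ finrank K L)]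

/-- for a nonzero Gabidulin code C of dimension 1 ≤ t ≤ k and
1 ≤ r ≤ t, the r-th generalized rank weight (min dim of a Frobenius-closed V
with dim(V ⊓ C) ≥ r) equals the min dim of an optimal Gabidulin anticode A
with dim(A ⊓ C) ≥ r. -/
theorem stmt10 {K L : Type*} [Field K] [Field L] [Algebra K L] [Fintype K] {k m : ℕ}
    (hk : 1 ≤ k) (hkm : k ≤ m) (hm : Module.finrank K L = m)
    (C : Submodule L (Fin k → L)) (hC : C ≠ ⊥)
    (ht : Module.finrank L C ≤ k)
    (r : ℕ) (hr1 : 1 ≤ r) (hr2 : r ≤ Module.finrank L C) :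
    sInf {d : ℕ | ∃ V : Submodule L (Fin k → L),
        FrobClosed K V ∧ r ≤ Module.finrank L ↥(V ⊓ C) ∧ Module.finrank L V = d} =
    sInf {d : ℕ | ∃ A : Submodule L (Fin k → L),
        Module.finrank L A = maxrk K A ∧ r ≤ Module.finrank L ↥(A ⊓ C) ∧
        Module.finrank L A = d} :=
  stmt10_general hk hkm hm C r
end
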